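/- Let (X,d) be a ν-generalized metric space, T : X → X a Ćirić–Matkowski contraction, x ∈ X a point whose orbit {T^n x} consists of pairwise distinct points, and suppose {T^n x} converges in the strong sense to z ∈ X. Then z is a fixed point of T. -/

import Mathlib

open Filter Topology

/-- `(X,d)` is a ν-generalized metric space. -/
def NuGenMetric (ν : ℕ) {X : Type*} (d : X → X → ℝ) : Prop :=
  (∀ x y, 0 ≤ d x y) ∧
  (∀ x y, d x y = 0 ↔ x = y) ∧
  (∀ x y, d x y = d y x) ∧
  (∀ u : Fin (ν + 2) → X, Function.Injective u →
    d (u 0) (u (Fin.last (ν + 1))) ≤ ∑ i : Fin (ν + 1), d (u i.castSucc) (u i.succ))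

/-- `{x n}` is `k`-Cauchy: `lim_n sup_m d(x_n, x_{n+1+mk}) = 0` (sup taken in `[0,∞]`). -/
def IsKCauchy {X : Type*} (d : X → X → ℝ) (x : ℕ → X) (k : ℕ) : Prop :=
  Filter.Tendsto (fun n => ⨆ m : ℕ, ENNReal.ofReal (d (x n) (x (n + 1 + m * k))))
    Filter.atTop (nhds 0)

/-!
Since `T` does not increase distances, `d (T z) (Tⁿ⁺¹ x) ≤ d z (Tⁿ x)`, so the orbit converges to
both `z` and `T z`. Limits of an injective sequence with vanishing consecutive distances are unique:
if `a ≠ b`, then for large `n` the points `a, x (n+1), …, x (n+ν), b` are pairwise distinct, and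
the `ν`-polygonal inequality bounds `d a b` by a sum of `ν + 1` distances that all tend to `0`.
-/

theorem IsKCauchy.tendsto_dist_succ {X : Type*} {d : X → X → ℝ} {x : ℕ → X} {k : ℕ}
    (h : IsKCauchy d x k) (hpos : ∀ a b, 0 ≤ d a b) :
    Tendsto (fun n => d (x n) (x (n + 1))) atTop (𝓝 0) := by
  have hle : ∀ n, ENNReal.ofReal (d (x n) (x (n + 1))) ≤
      ⨆ m : ℕ, ENNReal.ofReal (d (x n) (x (n + 1 + m * k))) := fun n => by
    simpa using le_iSup (fun m : ℕ => ENNReal.ofReal (d (x n) (x (n + 1 + m * k)))) 0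
  have := (ENNReal.tendsto_toReal ENNReal.zero_ne_top).comp
    (tendsto_of_tendsto_of_tendsto_of_le_of_le tendsto_const_nhds h (fun _ => zero_le) hle)
  simpa [Function.comp_def, ENNReal.toReal_ofReal (hpos _ _)] using this

theorem Function.Injective.eventually_ne_atTop {X : Type*} {x : ℕ → X}
    (hx : Function.Injective x) (a : X) : ∀ᶠ n in atTop, x n ≠ a := by
  rw [← Nat.cofinite_eq_atTop]
  exact hx.tendsto_cofinite.eventually (eventually_cofinite_ne a)

namespace NuGenMetric

variable {ν : ℕ} {X : Type*} {d : X → X → ℝ}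

theorem dist_le_sum_range (hX : NuGenMetric ν d) {g : ℕ → X}
    (hg : Set.InjOn g (Set.Iic (ν + 1))) :
    d (g 0) (g (ν + 1)) ≤ ∑ i ∈ Finset.range (ν + 1), d (g i) (g (i + 1)) := by
  have hinj : Function.Injective fun i : Fin (ν + 2) => g i := fun i j hij =>
    Fin.ext (hg (Nat.le_of_lt_succ i.isLt) (Nat.le_of_lt_succ j.isLt) hij)
  simpa [Fin.sum_univ_eq_sum_range (fun i => d (g i) (g (i + 1)))] using hX.2.2.2 _ hinj

theorem eq_of_tendsto_of_tendsto (hX : NuGenMetric ν d) (hν : 0 < ν) {x : ℕ → X}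
    (hx : Function.Injective x) (hsucc : Tendsto (fun n => d (x n) (x (n + 1))) atTop (𝓝 0))
    {a b : X} (ha : Tendsto (fun n => d a (x n)) atTop (𝓝 0))
    (hb : Tendsto (fun n => d b (x n)) atTop (𝓝 0)) : a = b := by
  by_contra hab
  let g : ℕ → ℕ → X := fun n i => if i = 0 then a else if i ≤ ν then x (n + i) else b
  have hpoly : ∀ᶠ n in atTop, d a b ≤ ∑ i ∈ Finset.range (ν + 1), d (g n i) (g n (i + 1)) := by
    filter_upwards [eventually_forall_ge_atTop.2 (hx.eventually_ne_atTop a),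
      eventually_forall_ge_atTop.2 (hx.eventually_ne_atTop b)] with n hna hnb
    have hinj : Set.InjOn (g n) (Set.Iic (ν + 1)) := by
      intro i hi j hj hij
      simp only [g, Set.mem_Iic] at hi hj hij
      split_ifs at hij <;> grind [hx.eq_iff]
    have hends : g n 0 = a ∧ g n (ν + 1) = b := by simp [g]
    simpa only [hends] using hX.dist_le_sum_range hinj
  have hedge : ∀ i ∈ Finset.range (ν + 1),
      Tendsto (fun n => d (g n i) (g n (i + 1))) atTop (𝓝 0) := by
    intro i hi
    rw [Finset.mem_range, Nat.lt_succ_iff] at hi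
    obtain rfl | hi0 := Nat.eq_zero_or_pos i
    · simpa [g, Nat.one_le_iff_ne_zero.2 hν.ne', Function.comp_def] using
        ha.comp (tendsto_add_atTop_nat 1)
    obtain rfl | hiν := hi.eq_or_lt
    · simpa [g, hi0.ne', hX.2.2.1 _ b, Function.comp_def] using
        hb.comp (tendsto_add_atTop_nat i)
    · simpa [g, hi0.ne', hi, hiν, ← add_assoc, Function.comp_def] using
        hsucc.comp (tendsto_add_atTop_nat i)
  have hdist : d a b ≤ 0 := ge_of_tendsto (by simpa using tendsto_finsetSum _ hedge) hpoly
  exact hab ((hX.2.1 a b).1 (le_antisymm hdist (hX.1 a b)))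

end NuGenMetric

theorem tendsto_dist_apply_iterate {X : Type*} {d : X → X → ℝ} {T : X → X}
    (hpos : ∀ a b, 0 ≤ d a b) (hT : ∀ a b, d (T a) (T b) ≤ d a b) {x z : X}
    (hz : Tendsto (fun n => d z (T^[n] x)) atTop (𝓝 0)) :
    Tendsto (fun n => d (T z) (T^[n] x)) atTop (𝓝 0) := by
  refine (tendsto_add_atTop_iff_nat 1).1 (squeeze_zero (fun _ => hpos _ _) (fun n => ?_) hz)
  simpa only [Function.iterate_succ_apply'] using hT z (T^[n] x)

theorem stmt_16_general {X : Type*} (ν : ℕ) (hν : 0 < ν) (d : X → X → ℝ)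
    (hX : NuGenMetric ν d) (T : X → X)
    (hc : ∀ x y : X, x ≠ y → d (T x) (T y) < d x y)
    (x : X) (hinj : Function.Injective (fun n : ℕ => T^[n] x)) (z : X)
    (hCauchy : IsKCauchy d (fun n => T^[n] x) 1)
    (hconv : Filter.Tendsto (fun n => d z (T^[n] x)) Filter.atTop (nhds 0)) :
    T z = z := by
  have hT : ∀ a b, d (T a) (T b) ≤ d a b := fun a b => by
    rcases eq_or_ne a b with rfl | hab
    · rw [(hX.2.1 _ _).2 rfl, (hX.2.1 _ _).2 rfl]
    · exact (hc a b hab).le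
  exact hX.eq_of_tendsto_of_tendsto hν hinj (hCauchy.tendsto_dist_succ hX.1)
    (tendsto_dist_apply_iterate hX.1 hT hconv) hconv

theorem stmt_16 {X : Type*} (ν : ℕ) (hν : 0 < ν) (d : X → X → ℝ)
    (hX : NuGenMetric ν d) (T : X → X)
    (hc : ∀ x y : X, x ≠ y → d (T x) (T y) < d x y)
    (hcm : ∀ ε > (0 : ℝ), ∃ δ > (0 : ℝ), ∀ x y : X,
      d x y < δ + ε → d (T x) (T y) ≤ ε)
    (x : X) (hinj : Function.Injective (fun n : ℕ => T^[n] x)) (z : X)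
    (hCauchy : IsKCauchy d (fun n => T^[n] x) 1)
    (hconv : Filter.Tendsto (fun n => d z (T^[n] x)) Filter.atTop (nhds 0)) :
    T z = z :=
  stmt_16_general ν hν d hX T hc x hinj z hCauchy hconv
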